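/- For every natural number n, the commutator uₙ = [kⁿ, θ1ⁿθ2⁻ⁿ] = k⁻ⁿ (θ1ⁿθ2⁻ⁿ)⁻¹ kⁿ (θ1ⁿθ2⁻ⁿ) equals the identity in G. -/

import Mathlib

/-!
In `G` the element `a` is fixed by conjugation with `θ₁` and `θ₂`, so conjugating `k`
by `θᵢⁿ` gives `k aⁿ` for both `i`. Conjugation by `θ₁ⁿ` and by `θ₂ⁿ` thus agree on `k`,
hence `θ₁ⁿθ₂⁻ⁿ` centralises `k`, and so commutes with `kⁿ`.
-/

def theta1 : FreeGroup (Fin 4) := FreeGroup.of 0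
def theta2 : FreeGroup (Fin 4) := FreeGroup.of 1
def aF : FreeGroup (Fin 4) := FreeGroup.of 2
def kF : FreeGroup (Fin 4) := FreeGroup.of 3

def rels : Set (FreeGroup (Fin 4)) :=
  {theta1⁻¹ * aF * theta1 * aF⁻¹, theta2⁻¹ * aF * theta2 * aF⁻¹,
   theta1⁻¹ * kF * theta1 * aF⁻¹ * kF⁻¹, theta2⁻¹ * kF * theta2 * aF⁻¹ * kF⁻¹}

abbrev G : Type := PresentedGroup rels

def π : FreeGroup (Fin 4) →* G := PresentedGroup.mk rels

section Conjugation

variable {M : Type*} [Group M]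

theorem inv_pow_mul_mul_pow_of_inv_mul_mul_eq {a k t : M} (hat : Commute a t)
    (hk : t⁻¹ * k * t = k * a) (n : ℕ) : (t ^ n)⁻¹ * k * t ^ n = k * a ^ n := by
  induction n with
  | zero => simp
  | succ n ih =>
    have ha : t⁻¹ * a ^ n * t = a ^ n := by
      rw [mul_assoc, (hat.pow_left n).eq, inv_mul_cancel_left]
    calc (t ^ (n + 1))⁻¹ * k * t ^ (n + 1)
        = t⁻¹ * ((t ^ n)⁻¹ * k * t ^ n) * t := by group
      _ = (t⁻¹ * k * t) * (t⁻¹ * a ^ n * t) := by rw [ih]; group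
      _ = k * a ^ (n + 1) := by rw [hk, ha, mul_assoc, pow_succ']

theorem commute_mul_inv_of_inv_mul_mul_eq {k x y : M} (h : x⁻¹ * k * x = y⁻¹ * k * y) :
    Commute k (x * y⁻¹) :=
  calc k * (x * y⁻¹)
      = x * (x⁻¹ * k * x) * y⁻¹ := by group
    _ = x * y⁻¹ * k := by rw [h]; group

end Conjugation

theorem commute_a_theta {θ : FreeGroup (Fin 4)} (hθ : θ = theta1 ∨ θ = theta2) :
    Commute (π aF) (π θ) := by
  have hrel : π (θ⁻¹ * aF * θ) = π aF :=
    PresentedGroup.mk_eq_mk_of_mul_inv_mem (by rcases hθ with rfl | rfl <;> simp [rels])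
  rw [map_mul, map_mul, map_inv, mul_assoc, inv_mul_eq_iff_eq_mul] at hrel
  exact hrel

theorem theta_inv_mul_k_mul_theta {θ : FreeGroup (Fin 4)} (hθ : θ = theta1 ∨ θ = theta2) :
    (π θ)⁻¹ * π kF * π θ = π kF * π aF := by
  have hrel : π (θ⁻¹ * kF * θ * aF⁻¹) = π kF :=
    PresentedGroup.mk_eq_mk_of_mul_inv_mem (by rcases hθ with rfl | rfl <;> simp [rels])
  rw [map_mul, map_inv π aF, mul_inv_eq_iff_eq_mul, map_mul, map_mul, map_inv] at hrel
  exact hrel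

theorem theta_pow_inv_mul_k_mul_theta_pow {θ : FreeGroup (Fin 4)}
    (hθ : θ = theta1 ∨ θ = theta2) (n : ℕ) : (π θ ^ n)⁻¹ * π kF * π θ ^ n = π kF * π aF ^ n :=
  inv_pow_mul_mul_pow_of_inv_mul_mul_eq (commute_a_theta hθ) (theta_inv_mul_k_mul_theta hθ) n

theorem commutator_trivial (n : ℕ) :
    (π kF ^ n)⁻¹ * (π theta1 ^ n * (π theta2 ^ n)⁻¹)⁻¹ * π kF ^ n *
      (π theta1 ^ n * (π theta2 ^ n)⁻¹) = 1 := by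
  have hconj : (π theta1 ^ n)⁻¹ * π kF * π theta1 ^ n =
      (π theta2 ^ n)⁻¹ * π kF * π theta2 ^ n := by
    rw [theta_pow_inv_mul_k_mul_theta_pow (.inl rfl), theta_pow_inv_mul_k_mul_theta_pow (.inr rfl)]
  have hcomm := (commute_mul_inv_of_inv_mul_mul_eq hconj).pow_left n
  rw [mul_assoc, mul_assoc, hcomm.eq]
  group
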